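/- The modified Bannai–Ito polynomials satisfy the symmetry Q_n(x; 𝔞,𝔟,𝔠,𝔡) = Q_n(x; 𝔟,𝔞,𝔠,𝔡): the recurrence coefficients c_n and u_n are invariant under exchanging 𝔞 ↔ 𝔟, hence the monic polynomials defined by the three-term recurrence coincide. -/
import Mathlib


open Complex Polynomial

/-- Bannai–Ito recurrence coefficient `Aₙ`. -/
noncomputable def Acoef (a b c d : ℂ) (n : ℕ) : ℂ :=
  if Even n then
    ((n : ℂ) + 2*a + 2*c + 2) * ((n : ℂ) + 2*a + 2*d + 2) / (2 * ((n : ℂ) + a + b + c + d + 2))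
  else
    ((n : ℂ) + 2*a + 2*b + 2) * ((n : ℂ) + 2*a + 2*b + 2*c + 2*d + 3)
      / (2 * ((n : ℂ) + a + b + c + d + 2))

/-- Bannai–Ito recurrence coefficient `Cₙ`. -/
noncomputable def Ccoef (a b c d : ℂ) (n : ℕ) : ℂ :=
  if Even n then
    -((n : ℂ) * ((n : ℂ) + 2*c + 2*d + 1)) / (2 * ((n : ℂ) + a + b + c + d + 1))
  else
    -(((n : ℂ) + 2*b + 2*c + 1) * ((n : ℂ) + 2*b + 2*d + 1))
      / (2 * ((n : ℂ) + a + b + c + d + 1))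

/-- Diagonal coefficient `cₙ = -i(2𝔞 + 1 - Aₙ - Cₙ)`. -/
noncomputable def ccoef (a b c d : ℂ) (n : ℕ) : ℂ :=
  -I * (2*a + 1 - Acoef a b c d n - Ccoef a b c d n)

/-- Off-diagonal coefficient `uₙ = -Aₙ₋₁Cₙ`. -/
noncomputable def ucoef (a b c d : ℂ) (n : ℕ) : ℂ :=
  -(Acoef a b c d (n - 1)) * Ccoef a b c d n

/-- The monic modified Bannai–Ito polynomials, defined by the three-term
recurrence `Qₙ₊₁ = (x - cₙ)Qₙ - uₙQₙ₋₁`, `Q₀ = 1`. -/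
noncomputable def Qpoly (a b c d : ℂ) : ℕ → Polynomial ℂ
  | 0 => 1
  | 1 => X - C (ccoef a b c d 0)
  | (n + 2) => (X - C (ccoef a b c d (n + 1))) * Qpoly a b c d (n + 1)
      - C (ucoef a b c d (n + 1)) * Qpoly a b c d n

/-- The modified Bannai–Ito recurrence coefficients, and hence the modified
Bannai–Ito polynomials, are invariant under exchanging `𝔞 ↔ 𝔟`:
`Qₙ(x; 𝔞,𝔟,𝔠,𝔡) = Qₙ(x; 𝔟,𝔞,𝔠,𝔡)`. -/
theorem Qpoly_symm_ab (a b c d : ℂ)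
    (hden : ∀ n : ℕ, ((n : ℂ) + a + b + c + d + 2 ≠ 0) ∧ ((n : ℂ) + a + b + c + d + 1 ≠ 0)) :
    (∀ n : ℕ, ccoef a b c d n = ccoef b a c d n ∧ ucoef a b c d n = ucoef b a c d n) ∧
    (∀ n : ℕ, Qpoly a b c d n = Qpoly b a c d n) := by
  have hc : ∀ n : ℕ, ccoef a b c d n = ccoef b a c d n := by
    intro n
    obtain ⟨h2, h1⟩ := hden n
    have h2' : (n : ℂ) + b + a + c + d + 2 ≠ 0 := by
      intro h; apply h2; linear_combination h
    have h1' : (n : ℂ) + b + a + c + d + 1 ≠ 0 := by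
      intro h; apply h1; linear_combination h
    rcases Nat.even_or_odd n with hE | hO
    · simp only [ccoef, Acoef, Ccoef, if_pos hE]
      field_simp
      ring
    · simp only [ccoef, Acoef, Ccoef, if_neg (Nat.not_even_iff_odd.mpr hO)]
      field_simp
      ring
  have hu : ∀ n : ℕ, ucoef a b c d n = ucoef b a c d n := by
    intro n
    rcases Nat.even_or_odd n with hE | hO
    · rcases Nat.eq_zero_or_pos n with rfl | hpos
      · simp [ucoef, Ccoef]
      · -- n even positive, n - 1 odd
        have hO' : ¬ Even (n - 1) := by
          rw [Nat.even_iff] at hE ⊢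
          omega
        obtain ⟨h2, h1⟩ := hden n
        have h1' : (n : ℂ) + b + a + c + d + 1 ≠ 0 := by
          intro h; apply h1; linear_combination h
        simp only [ucoef, Acoef, Ccoef, if_neg hO', if_pos hE]
        field_simp
        ring
    · -- n odd, n ≥ 1, n - 1 even
      have hE' : Even (n - 1) := by
        rcases hO with ⟨k, rfl⟩; simpa using even_two_mul k
      have hn1 : ((n - 1 : ℕ) : ℂ) = (n : ℂ) - 1 := by
        have : 1 ≤ n := by rcases hO with ⟨k, rfl⟩; omega
        push_cast [Nat.cast_sub this]; ring
      obtain ⟨h2, h1⟩ := hden n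
      have h1' : (n : ℂ) + b + a + c + d + 1 ≠ 0 := by
        intro h; apply h1; linear_combination h
      simp only [ucoef, Acoef, Ccoef, if_pos hE', if_neg (Nat.not_even_iff_odd.mpr hO), hn1]
      field_simp
      ring
  refine ⟨fun n => ⟨hc n, hu n⟩, ?_⟩
  have key : ∀ n : ℕ, Qpoly a b c d n = Qpoly b a c d n ∧
      Qpoly a b c d (n + 1) = Qpoly b a c d (n + 1) := by
    intro n
    induction n with
    | zero => exact ⟨rfl, by simp [Qpoly, hc 0]⟩
    | succ k ih =>
      refine ⟨ih.2, ?_⟩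
      show Qpoly a b c d (k + 2) = Qpoly b a c d (k + 2)
      simp only [Qpoly, hc (k + 1), hu (k + 1), ih.1, ih.2]
  exact fun n => (key n).1
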